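/- For μ₀ = N(0, Σ₀) and μ₁ = N(0, Σ₁) centered Gaussian measures on ℝ^d with Σ₀, Σ₁ symmetric positive definite, the linear map T(x) = A x with A = Σ₀^{-1/2}(Σ₀^{1/2} Σ₁ Σ₀^{1/2})^{1/2} Σ₀^{-1/2} pushes μ₀ forward to μ₁, i.e. T_♯μ₀ = μ₁; moreover A is symmetric positive definite (hence T = ∇u for the convex function u(x) = (1/2)xᵀAx). -/

import Mathlib

open MeasureTheory Matrix
open scoped Real ENNReal

/-- The centered Gaussian measure `N(0, S)` on `ℝ^d`, given by its density
`x ↦ ((2π)^d det S)^{-1/2} exp(-xᵀ S⁻¹ x / 2)` with respect to Lebesgue measure. -/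
noncomputable def gaussianMeasure {d : ℕ} (S : Matrix (Fin d) (Fin d) ℝ) :
    Measure (EuclideanSpace ℝ (Fin d)) :=
  volume.withDensity fun x =>
    ENNReal.ofReal (((2 * π) ^ d * S.det) ^ (-(1 : ℝ) / 2) *
      Real.exp (-(x ⬝ᵥ S⁻¹.mulVec x) / 2))

lemma map_withDensity_equiv {α β : Type*} [MeasurableSpace α] [MeasurableSpace β]
    (e : α ≃ᵐ β) (μ : Measure α) (f : α → ℝ≥0∞) :
    (μ.withDensity f).map e = (μ.map e).withDensity fun y => f (e.symm y) := by
  ext s hs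
  rw [MeasurableEquiv.map_apply, withDensity_apply _ (e.measurable hs),
    withDensity_apply _ hs, Measure.restrict_map e.measurable hs,
    e.measurableEmbedding.lintegral_map]
  simp

lemma measurable_mulVec {d : ℕ} (A : Matrix (Fin d) (Fin d) ℝ) :
    Measurable (fun x : EuclideanSpace ℝ (Fin d) =>
      (WithLp.toLp 2 (A.mulVec x) : EuclideanSpace ℝ (Fin d))) := by
  have h : Measurable (fun x : Fin d → ℝ => A.mulVec x) := by
    have := (LinearMap.continuous_of_finiteDimensional (Matrix.toLin' A)).measurable
    exact this
  exact ((MeasurableEquiv.toLp 2 (Fin d → ℝ)).measurable.comp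
    (h.comp (MeasurableEquiv.toLp 2 (Fin d → ℝ)).symm.measurable))

lemma map_mulVec_volume {d : ℕ} (A : Matrix (Fin d) (Fin d) ℝ) (hA : A.det ≠ 0) :
    Measure.map (fun x : EuclideanSpace ℝ (Fin d) =>
        (WithLp.toLp 2 (A.mulVec x) : EuclideanSpace ℝ (Fin d))) volume
      = ENNReal.ofReal |A.det⁻¹| • (volume : Measure (EuclideanSpace ℝ (Fin d))) := by
  set e := (MeasurableEquiv.toLp 2 (Fin d → ℝ)).symm
  have hvol : MeasurePreserving e volume volume :=
    EuclideanSpace.volume_preserving_symm_measurableEquiv_toLp (Fin d)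
  have hvolE : (volume : Measure (EuclideanSpace ℝ (Fin d))) = Measure.map e.symm volume :=
    (hvol.symm e).map_eq.symm
  have step1 : Measure.map (fun x : EuclideanSpace ℝ (Fin d) =>
      (WithLp.toLp 2 (A.mulVec x) : EuclideanSpace ℝ (Fin d))) volume
      = Measure.map (e.symm ∘ (Matrix.toLin' A)) volume := by
    rw [hvolE, Measure.map_map (measurable_mulVec A) e.symm.measurable]
    rfl
  have step2 : Measure.map (e.symm ∘ (Matrix.toLin' A)) volume
      = Measure.map e.symm (Measure.map (Matrix.toLin' A) volume) :=
    (Measure.map_map e.symm.measurable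
      (Matrix.toLin' A).continuous_of_finiteDimensional.measurable).symm
  have step3 : Measure.map (Matrix.toLin' A) (volume : Measure (Fin d → ℝ))
      = ENNReal.ofReal |A.det⁻¹| • volume :=
    Real.map_matrix_volume_pi_eq_smul_volume_pi hA
  rw [step1, step2, step3, Measure.map_smul, ← hvolE]

/-- For centered Gaussians `μ₀ = N(0, V₀)`, `μ₁ = N(0, V₁)` with `V₀, V₁ ≻ 0`, the linear
map `T x = A x` with `A = V₀^{-1/2} (V₀^{1/2} V₁ V₀^{1/2})^{1/2} V₀^{-1/2}` pushes `μ₀`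
forward to `μ₁`, and `A` is symmetric positive definite.  Here `S = V₀^{1/2}` and
`R = (V₀^{1/2} V₁ V₀^{1/2})^{1/2}` are the (unique) positive definite square roots. -/
theorem stmt_15 {d : ℕ}
    (V₀ V₁ : Matrix (Fin d) (Fin d) ℝ) (h₀ : V₀.PosDef) (h₁ : V₁.PosDef)
    (S : Matrix (Fin d) (Fin d) ℝ) (hS : S.PosDef) (hSsq : S * S = V₀)
    (R : Matrix (Fin d) (Fin d) ℝ) (hR : R.PosDef) (hRsq : R * R = S * V₁ * S)
    (A : Matrix (Fin d) (Fin d) ℝ) (hA : A = S⁻¹ * R * S⁻¹)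
    (T : EuclideanSpace ℝ (Fin d) → EuclideanSpace ℝ (Fin d))
    (hT : ∀ x, T x = A.mulVec x) :
    Measure.map T (gaussianMeasure V₀) = gaussianMeasure V₁ ∧ A.IsSymm ∧ A.PosDef := by
  have hSdet : IsUnit S.det := hS.det_pos.ne'.isUnit
  haveI := S.invertibleOfIsUnitDet hSdet
  have hSsym : Sᵀ = S := by
    simpa [Matrix.conjTranspose_eq_transpose_of_trivial] using hS.isHermitian.eq
  have hRsym : Rᵀ = R := by
    simpa [Matrix.conjTranspose_eq_transpose_of_trivial] using hR.isHermitian.eq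
  have hAsym : A.IsSymm := by
    rw [Matrix.IsSymm, hA, Matrix.transpose_mul, Matrix.transpose_mul,
      Matrix.transpose_nonsing_inv, hSsym, hRsym, Matrix.mul_assoc]
  have hApos : A.PosDef := by
    refine Matrix.posDef_iff_dotProduct_mulVec.mpr ⟨?_, ?_⟩
    · rw [Matrix.IsHermitian, Matrix.conjTranspose_eq_transpose_of_trivial]
      exact hAsym
    · intro x hx
      have hx' : S⁻¹.mulVec x ≠ 0 := by
        intro h
        apply hx
        have := congrArg (S.mulVec) h
        rwa [Matrix.mulVec_mulVec, Matrix.mul_nonsing_inv _ hSdet, Matrix.one_mulVec,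
          Matrix.mulVec_zero] at this
      have hpos := hR.dotProduct_mulVec_pos hx'
      rw [star_trivial] at hpos ⊢
      rw [hA, ← Matrix.mulVec_mulVec, ← Matrix.mulVec_mulVec]
      rw [show x ⬝ᵥ S⁻¹ *ᵥ (R *ᵥ (S⁻¹ *ᵥ x)) = (S⁻¹ *ᵥ x) ⬝ᵥ (R *ᵥ (S⁻¹ *ᵥ x)) from ?_]
      · exact hpos
      · rw [Matrix.dotProduct_mulVec x S⁻¹, ← Matrix.mulVec_transpose,
          Matrix.transpose_nonsing_inv, hSsym]
  have hAdet : A.det ≠ 0 := hApos.det_pos.ne'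
  have hAunit : IsUnit A.det := hAdet.isUnit
  haveI := A.invertibleOfIsUnitDet hAunit
  have hAinvsym : (A⁻¹)ᵀ = A⁻¹ := by
    rw [Matrix.transpose_nonsing_inv, hAsym.eq]
  -- key algebraic identity : A * V₀ * A = V₁
  have key : A * V₀ * A = V₁ := by
    rw [hA, ← hSsq]
    calc S⁻¹ * R * S⁻¹ * (S * S) * (S⁻¹ * R * S⁻¹)
        = S⁻¹ * (R * (S⁻¹ * (S * (S * (S⁻¹ * (R * S⁻¹)))))) := by
          simp only [Matrix.mul_assoc]
      _ = S⁻¹ * ((R * R) * S⁻¹) := by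
          rw [Matrix.inv_mul_cancel_left_of_invertible,
            Matrix.mul_inv_cancel_left_of_invertible, Matrix.mul_assoc]
      _ = S⁻¹ * (S * (V₁ * (S * S⁻¹))) := by
          rw [hRsq]; simp only [Matrix.mul_assoc]
      _ = V₁ := by
          rw [Matrix.mul_nonsing_inv _ hSdet, Matrix.mul_one,
            Matrix.inv_mul_cancel_left_of_invertible]
  -- inverse identity
  have hV1inv : V₁⁻¹ = A⁻¹ * V₀⁻¹ * A⁻¹ := by
    rw [← key, Matrix.mul_inv_rev, Matrix.mul_inv_rev, Matrix.mul_assoc]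
  -- determinant identity
  have hdet1 : V₁.det = A.det * V₀.det * A.det := by
    rw [← key, Matrix.det_mul, Matrix.det_mul]
  -- the quadratic form identity
  have hquad : ∀ y : Fin d → ℝ,
      (A⁻¹ *ᵥ y) ⬝ᵥ (V₀⁻¹ *ᵥ (A⁻¹ *ᵥ y)) = y ⬝ᵥ (V₁⁻¹ *ᵥ y) := by
    intro y
    rw [hV1inv, ← Matrix.mulVec_mulVec, ← Matrix.mulVec_mulVec]
    rw [Matrix.dotProduct_mulVec y A⁻¹, ← Matrix.mulVec_transpose, hAinvsym]
  -- the constant identity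
  have hp : (0:ℝ) < (2 * π) ^ d := by positivity
  have hv0 : (0:ℝ) < V₀.det := h₀.det_pos
  have ha : (0:ℝ) < A.det := hApos.det_pos
  have hconst : |A.det⁻¹| * ((2 * π) ^ d * V₀.det) ^ (-(1 : ℝ) / 2)
      = ((2 * π) ^ d * V₁.det) ^ (-(1 : ℝ) / 2) := by
    have h1 : (2 * π) ^ d * V₁.det = (A.det * A.det) * ((2 * π) ^ d * V₀.det) := by
      rw [hdet1]; ring
    have h2 : (A.det * A.det) ^ (-(1 : ℝ) / 2) = A.det⁻¹ := by
      have e1 : A.det ^ (2 : ℝ) = A.det * A.det := by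
        rw [Real.rpow_two, pow_two]
      rw [← e1, ← Real.rpow_mul ha.le]
      norm_num
      exact Real.rpow_neg_one A.det
    rw [h1, Real.mul_rpow (mul_pos ha ha).le (mul_pos hp hv0).le, h2,
      abs_of_pos (inv_pos.mpr ha)]
  -- the measurable equivalence given by A
  let eT : EuclideanSpace ℝ (Fin d) ≃ᵐ EuclideanSpace ℝ (Fin d) :=
    { toFun := fun x => (WithLp.toLp 2 (A.mulVec x) : EuclideanSpace ℝ (Fin d))
      invFun := fun y => (WithLp.toLp 2 (A⁻¹.mulVec y) : EuclideanSpace ℝ (Fin d))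
      left_inv := fun x => by
        show (WithLp.toLp 2 (A⁻¹.mulVec (A.mulVec x)) : EuclideanSpace ℝ (Fin d)) = x
        rw [Matrix.mulVec_mulVec, Matrix.nonsing_inv_mul _ hAunit, Matrix.one_mulVec]
      right_inv := fun y => by
        show (WithLp.toLp 2 (A.mulVec (A⁻¹.mulVec y)) : EuclideanSpace ℝ (Fin d)) = y
        rw [Matrix.mulVec_mulVec, Matrix.mul_nonsing_inv _ hAunit, Matrix.one_mulVec]
      measurable_toFun := measurable_mulVec A
      measurable_invFun := measurable_mulVec A⁻¹ }
  have hTeq : T = ⇑eT := funext fun x => by rw [← WithLp.toLp_ofLp (x := T x), hT]; rfl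
  refine ⟨?_, hAsym, hApos⟩
  rw [hTeq, gaussianMeasure, map_withDensity_equiv eT]
  have hmapvol : Measure.map (⇑eT) (volume : Measure (EuclideanSpace ℝ (Fin d)))
      = ENNReal.ofReal |A.det⁻¹| • (volume : Measure (EuclideanSpace ℝ (Fin d))) :=
    map_mulVec_volume A hAdet
  rw [hmapvol, withDensity_smul_measure]
  rw [gaussianMeasure]
  rw [← withDensity_smul' _ _ (by simp)]
  congr 1
  funext y
  have hsymm : eT.symm y = (WithLp.toLp 2 (A⁻¹.mulVec y) : EuclideanSpace ℝ (Fin d)) := rfl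
  rw [Pi.smul_apply, smul_eq_mul, hsymm]
  rw [← ENNReal.ofReal_mul (abs_nonneg _)]
  congr 1
  have hq := hquad y
  calc |A.det⁻¹| * (((2 * π) ^ d * V₀.det) ^ (-(1 : ℝ) / 2) *
        Real.exp (-((A⁻¹.mulVec y) ⬝ᵥ
          V₀⁻¹.mulVec (A⁻¹.mulVec y)) / 2))
      = (|A.det⁻¹| * ((2 * π) ^ d * V₀.det) ^ (-(1 : ℝ) / 2)) *
        Real.exp (-(y ⬝ᵥ V₁⁻¹.mulVec y) / 2) := by
        rw [mul_assoc]
        congr 2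
        rw [hq]
    _ = ((2 * π) ^ d * V₁.det) ^ (-(1 : ℝ) / 2) *
        Real.exp (-(y ⬝ᵥ V₁⁻¹.mulVec y) / 2) := by rw [hconst]
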